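/- arXiv:1502.07623 — 3 statements merged into one kernel-verified Lean document; each statement's English description precedes it below -/
import Mathlib

section
/- Let k be an algebraically closed field of characteristic p, let u be a positive integer prime to p, ν ≥ 0, and set M = u(p^{ν+1}−1). For any integer q, Σ_{x ∈ μ_M} (−Tr_{F_{p^{ν+1}}/F_p}(x^{−u})) · x^q equals u if q ≡ u p^i (mod M) for some 0 ≤ i ≤ ν, and equals 0 otherwise (the sum is computed in k). -/
/-!
Expanding the trace, the sum is `-∑_{i ≤ ν} ∑_{x ∈ μ_M} x ^ (q - u p^i)`. By orthogonality of
the `M`-th roots of unity each inner sum is `M` or `0` according as `M ∣ q - u p^i`; at most one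
`i ≤ ν` contributes because the `p^i` are distinct modulo `p^(ν+1) - 1`, and `M = -u` in `k`.
-/

open scoped Classical

open Finset Polynomial

theorem IsPrimitiveRoot.sum_nthRootsFinset_zpow {K : Type*} [Field K] {ζ : K} {n : ℕ}
    (hζ : IsPrimitiveRoot ζ n) (j : ℤ) :
    ∑ x ∈ nthRootsFinset n (1 : K), x ^ j = if (n : ℤ) ∣ j then (n : K) else 0 := by
  rcases n.eq_zero_or_pos with rfl | hn
  · simp
  have hmem : ∀ {x : K}, x ∈ nthRootsFinset n (1 : K) ↔ x ^ n = 1 :=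
    Polynomial.mem_nthRootsFinset hn 1
  split_ifs with hj
  · obtain ⟨m, rfl⟩ := hj
    have hone : ∀ x ∈ nthRootsFinset n (1 : K), x ^ ((n : ℤ) * m) = 1 := fun x hx => by
      rw [zpow_mul, zpow_natCast, hmem.1 hx, one_zpow]
    rw [sum_congr rfl hone, sum_const, hζ.card_nthRootsFinset, nsmul_one]
  · have hζ0 : ζ ≠ 0 := hζ.ne_zero hn.ne'
    -- multiplication by `ζ` permutes the `n`-th roots of unity
    have hfix : ζ ^ j * ∑ x ∈ nthRootsFinset n (1 : K), x ^ j
        = ∑ x ∈ nthRootsFinset n (1 : K), x ^ j := by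
      rw [mul_sum]
      refine sum_nbij' (ζ * ·) (ζ⁻¹ * ·) ?_ ?_ ?_ ?_ ?_
      · intro x hx
        simpa using mul_mem_nthRootsFinset (hζ.mem_nthRootsFinset hn) hx
      · intro x hx
        simp_all [mul_pow, inv_pow, hζ.pow_eq_one]
      · intro x _; simp [hζ0]
      · intro x _; simp [hζ0]
      · intro x _; simp [mul_zpow]
    have hne : ζ ^ j ≠ 1 := mt (hζ.zpow_eq_one_iff_dvd j).1 hj
    exact eq_zero_of_mul_eq_self_left hne hfix

theorem Finset.sum_ite_const_of_subsingleton {ι M : Type*} [AddCommMonoid M] {s : Finset ι}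
    {P : ι → Prop} [DecidablePred P] (hP : ∀ i ∈ s, ∀ j ∈ s, P i → P j → i = j) (c : M) :
    ∑ i ∈ s, (if P i then c else 0) = if ∃ i ∈ s, P i then c else 0 := by
  split_ifs with h
  · obtain ⟨i, hi, hPi⟩ := h
    rw [sum_eq_single_of_mem i hi fun j hj hji => if_neg fun hPj => hji (hP j hj i hi hPj hPi),
      if_pos hPi]
  · push Not at h
    exact sum_eq_zero fun i hi => if_neg (h i hi)

theorem Nat.eq_of_pow_modEq_pow {p ν i j : ℕ} (hp : 2 ≤ p) (hi : i ≤ ν) (hj : j ≤ ν)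
    (h : p ^ i ≡ p ^ j [MOD p ^ (ν + 1) - 1]) : i = j := by
  wlog hij : i ≤ j generalizing i j
  · exact (this hj hi h.symm (by omega)).symm
  have hij' : p ^ i ≤ p ^ j := Nat.pow_le_pow_right (by omega) hij
  have hdvd := (Nat.modEq_iff_dvd' hij').1 h
  have h1 : 1 ≤ p ^ i := Nat.one_le_pow _ _ (by omega)
  have h2 : p ^ j ≤ p ^ ν := Nat.pow_le_pow_right (by omega) hj
  have h3 : 2 * p ^ ν ≤ p ^ (ν + 1) := by rw [pow_succ']; exact Nat.mul_le_mul_right _ hp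
  have : p ^ j - p ^ i = 0 := Nat.eq_zero_of_dvd_of_lt hdvd (by omega)
  exact Nat.pow_right_injective hp (show p ^ i = p ^ j by omega)

theorem CharP.cast_mul_pow_succ_sub_one {R : Type*} [Ring R] (p : ℕ) [CharP R p] (hp : p ≠ 0)
    (u ν : ℕ) : ((u * (p ^ (ν + 1) - 1) : ℕ) : R) = -u := by
  rw [Nat.cast_mul, Nat.cast_sub (Nat.one_le_pow _ _ (Nat.pos_of_ne_zero hp)), Nat.cast_pow,
    CharP.cast_eq_zero R p, zero_pow (Nat.succ_ne_zero ν), Nat.cast_one, zero_sub, mul_neg_one]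

theorem stmt4_general (k : Type*) [Field k] [IsAlgClosed k] (p : ℕ) [Fact p.Prime] [CharP k p]
    (u ν : ℕ) (hpu : ¬ p ∣ u) (M : ℕ) (hM : M = u * (p ^ (ν + 1) - 1))
    (q : ℤ) :
    ∑ x ∈ Polynomial.nthRootsFinset M (1 : k),
        (-(∑ i ∈ Finset.range (ν + 1), (x⁻¹ ^ u) ^ (p ^ i))) * x ^ q
      = if ∃ i ≤ ν, q ≡ (u : ℤ) * (p : ℤ) ^ i [ZMOD (M : ℤ)] then (u : k) else 0 := by
  have hp : p.Prime := Fact.out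
  have hu : u ≠ 0 := by rintro rfl; exact hpu (dvd_zero p)
  have hMk : (M : k) = -u := hM ▸ CharP.cast_mul_pow_succ_sub_one p hp.ne_zero u ν
  have : NeZero (M : k) := ⟨by rwa [hMk, neg_ne_zero, Ne, CharP.cast_eq_zero_iff k p]⟩
  obtain ⟨ζ, hζ⟩ := HasEnoughRootsOfUnity.exists_primitiveRoot k M
  have hunique : ∀ i ∈ range (ν + 1), ∀ j ∈ range (ν + 1),
      q ≡ u * p ^ i [ZMOD M] → q ≡ u * p ^ j [ZMOD M] → i = j := by
    intro i hi j hj hqi hqj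
    refine Nat.eq_of_pow_modEq_pow hp.two_le (Nat.lt_succ_iff.1 (mem_range.1 hi))
      (Nat.lt_succ_iff.1 (mem_range.1 hj)) (Nat.ModEq.mul_left_cancel' hu ?_)
    rw [← Int.natCast_modEq_iff, ← hM]
    push_cast
    exact hqi.symm.trans hqj
  calc ∑ x ∈ nthRootsFinset M (1 : k), (-(∑ i ∈ range (ν + 1), (x⁻¹ ^ u) ^ (p ^ i))) * x ^ q
      = -∑ i ∈ range (ν + 1), ∑ x ∈ nthRootsFinset M (1 : k), x ^ (q - u * p ^ i) := by
        rw [sum_comm, ← sum_neg_distrib]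
        refine sum_congr rfl fun x hx => ?_
        have hx0 : x ≠ 0 := ne_zero_of_mem_nthRootsFinset one_ne_zero hx
        rw [neg_mul, sum_mul]
        congr 1
        refine sum_congr rfl fun i _ => ?_
        rw [← pow_mul, inv_pow, ← zpow_natCast, ← zpow_neg, ← zpow_add₀ hx0]
        push_cast
        ring_nf
    _ = -∑ i ∈ range (ν + 1), if q ≡ u * p ^ i [ZMOD M] then (M : k) else 0 := by
        simp_rw [hζ.sum_nthRootsFinset_zpow, ← Int.modEq_iff_dvd, Int.modEq_comm]
    _ = _ := by
        rw [sum_ite_const_of_subsingleton hunique, hMk, apply_ite Neg.neg, neg_neg, neg_zero]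
        simp only [mem_range, Nat.lt_succ_iff]

/-- The character-sum computation: for `M = u(p^(ν+1)-1)` and any integer `q`,
`∑_{x ∈ μ_M} (-Tr(x^{-u})) x^q` equals `u` if `q ≡ u p^i (mod M)` for some `0 ≤ i ≤ ν`,
and `0` otherwise. -/
theorem stmt4 (k : Type*) [Field k] [IsAlgClosed k] (p : ℕ) [Fact p.Prime] [CharP k p]
    (u ν : ℕ) (hu : 0 < u) (hpu : ¬ p ∣ u) (M : ℕ) (hM : M = u * (p ^ (ν + 1) - 1))
    (q : ℤ) :
    ∑ x ∈ Polynomial.nthRootsFinset M (1 : k),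
        (-(∑ i ∈ Finset.range (ν + 1), (x⁻¹ ^ u) ^ (p ^ i))) * x ^ q
      = if ∃ i ≤ ν, q ≡ (u : ℤ) * (p : ℤ) ^ i [ZMOD (M : ℤ)] then (u : k) else 0 :=
  stmt4_general k p u ν hpu M hM q
end

section
/- Let p be an odd prime, r ≥ 1 with 2r ≤ p − 1, and let a_1, ..., a_r ∈ F_p satisfy the system Σ_{j=1}^r a_j · j^q = c_q for all odd q with 1 ≤ q ≤ 2r − 1, where c_1 ≠ 0 and c_q = 0 for all odd q with 3 ≤ q ≤ 2r − 1. Then every a_j is nonzero. -/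
/-- Natural numbers in `[1, (p-1)/2]` have distinct squares mod `p` and nonzero casts. -/
lemma cast_ne_zero_of_small {p u : ℕ} (hp : p.Prime) (hu1 : 1 ≤ u) (hup : u < p) :
    ((u : ZMod p) ≠ 0) := by
  haveI : Fact p.Prime := ⟨hp⟩
  have : ¬ (p ∣ u) := Nat.not_dvd_of_pos_of_lt (by omega) hup
  simpa [ZMod.natCast_eq_zero_iff] using this

lemma sq_inj_of_small {p u v : ℕ} (hp : p.Prime) (hu1 : 1 ≤ u) (hv1 : 1 ≤ v)
    (hsum : u + v ≤ p - 1) (h : ((u : ZMod p))^2 = ((v : ZMod p))^2) : u = v := by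
  haveI : Fact p.Prime := ⟨hp⟩
  have hp1 : 1 ≤ p := hp.one_lt.le
  have h' : ((u : ZMod p) - v) * ((u : ZMod p) + v) = 0 := by ring_nf; ring_nf at h; linear_combination h
  have := mul_eq_zero.mp h'
  rcases this with h1 | h2
  · have : ((u : ZMod p)) = v := by linear_combination h1
    have : (u : ZMod p) = (v : ℕ) := this
    rw [ZMod.natCast_eq_natCast_iff] at this
    have hu : u % p = u := Nat.mod_eq_of_lt (by omega)
    have hv : v % p = v := Nat.mod_eq_of_lt (by omega)
    unfold Nat.ModEq at this
    omega
  · exfalso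
    have : ((u + v : ℕ) : ZMod p) = 0 := by push_cast; linear_combination h2
    rw [ZMod.natCast_eq_zero_iff] at this
    have := Nat.le_of_dvd (by omega) this
    omega

/-- If `∑ a j * j^q` vanishes for all odd `q` with `3 ≤ q ≤ 2r - 1` but not for `q = 1`,
then every `a j` is nonzero. -/
theorem stmt8 (p r : ℕ) (hp : p.Prime) (hodd : Odd p) (hr : 1 ≤ r)
    (h2r : 2 * r ≤ p - 1) (a : Fin r → ZMod p)
    (h1 : (∑ j : Fin r, a j * (((j : ℕ) + 1 : ℕ) : ZMod p) ^ 1) ≠ 0)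
    (h0 : ∀ q : ℕ, Odd q → 3 ≤ q → q ≤ 2 * r - 1 →
      (∑ j : Fin r, a j * (((j : ℕ) + 1 : ℕ) : ZMod p) ^ q) = 0) :
    ∀ j, a j ≠ 0 := by
  haveI : Fact p.Prime := ⟨hp⟩
  obtain ⟨m, rfl⟩ : ∃ m, r = m + 1 := ⟨r - 1, (Nat.succ_pred_eq_of_pos hr).symm⟩
  intro j₀ haj₀
  -- notation
  set N : Fin (m + 1) → ZMod p := fun j => (((j : ℕ) + 1 : ℕ) : ZMod p) with hN
  have hjlt : ∀ j : Fin (m + 1), (j : ℕ) + 1 < p := by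
    intro j; have := j.isLt; omega
  have hNne : ∀ j, N j ≠ 0 := fun j =>
    cast_ne_zero_of_small hp (by omega) (hjlt j)
  -- the squares indexed by the complement of j₀
  set x : Fin m → ZMod p := fun i => (N (j₀.succAbove i)) ^ 2 with hx
  set c : Fin m → ZMod p := fun i => a (j₀.succAbove i) * (N (j₀.succAbove i)) ^ 3 with hc
  have hxinj : Function.Injective x := by
    intro i j hij
    have hij' : ((((j₀.succAbove i) : ℕ) + 1 : ℕ) : ZMod p) ^ 2
        = ((((j₀.succAbove j) : ℕ) + 1 : ℕ) : ZMod p) ^ 2 := by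
      simpa [hx, hN] using hij
    have hi := (j₀.succAbove i).isLt
    have hj2 := (j₀.succAbove j).isLt
    have h := sq_inj_of_small (h := hij') hp (by omega) (by omega) (by omega)
    exact Fin.succAbove_right_injective (p := j₀) (Fin.ext (by omega))
  have hvanish : ∀ k : Fin m, (∑ i : Fin m, c i * x i ^ (k : ℕ)) = 0 := by
    intro k
    have hq : ∀ i : Fin m, c i * x i ^ (k : ℕ)
        = a (j₀.succAbove i) * (N (j₀.succAbove i)) ^ (2 * (k : ℕ) + 3) := by
      intro i
      rw [hc, hx]
      rw [← pow_mul, mul_assoc, ← pow_add]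
      ring_nf
    rw [Finset.sum_congr rfl (fun i _ => hq i)]
    have hfull := h0 (2 * (k : ℕ) + 3) ⟨(k : ℕ) + 1, by ring⟩ (by omega)
      (by have := k.isLt; omega)
    rw [Fin.sum_univ_succAbove (fun j => a j * N j ^ (2 * (k : ℕ) + 3)) j₀] at hfull
    rw [haj₀, zero_mul, zero_add] at hfull
    exact hfull
  have hc0 : c = 0 := Matrix.eq_zero_of_forall_pow_sum_mul_pow_eq_zero hxinj hvanish
  have hall : ∀ j, a j = 0 := by
    intro j
    by_cases hj : j = j₀
    · rwa [hj]
    · obtain ⟨i, rfl⟩ := Fin.exists_succAbove_eq hj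
      have := congrFun hc0 i
      simp only [hc, Pi.zero_apply] at this
      rcases mul_eq_zero.mp this with h | h
      · exact h
      · exact absurd (pow_eq_zero_iff (by norm_num) |>.mp h) (hNne _)
  apply h1
  rw [Finset.sum_congr rfl (fun j _ => by rw [hall j, zero_mul])]
  simp
end

section
/- Let R be a complete DVR of mixed characteristic (0,p) with valuation v, v(p)=1, and consider power series in R{T^{−1}}⊗K with the coefficientwise valuation v_ch defined as follows: fix rationals 0 < r_hub < r_crit and s > 0, and for F = Σ_{q<M} c_q p^{q·r_crit} T^{−q} + Σ_{q≥M} c_q p^{s + q·r_hub} T^{−q} set v_ch(F) = min_q v(c_q), where M, s satisfy s = M(r_crit − r_hub). Then v_ch(F_1 F_2) ≥ v_ch(F_1) + v_ch(F_2) for all F_1, F_2. -/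
/-!
The weight can be rewritten as `w q = q * r_hub + min q M * (r_crit - r_hub)`. Since
`min (i + j) M ≤ min i M + min j M` and `r_crit - r_hub ≥ 0`, it is subadditive, and a subadditive
weight makes coefficientwise lower bounds add up under the Cauchy product, by the ultrametric
inequality applied to `coeff q (F₁ * F₂) = ∑_{i + j = q} coeff i F₁ * coeff j F₂`.
-/

def critHubWeight (M : ℕ) (rcrit rhub : ℚ) (q : ℕ) : ℚ :=
  q * rhub + min q M * (rcrit - rhub)

lemma critHubWeight_eq_ite (M : ℕ) (rcrit rhub : ℚ) (q : ℕ) :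
    critHubWeight M rcrit rhub q =
      if q < M then q * rcrit else M * (rcrit - rhub) + q * rhub := by
  unfold critHubWeight
  split_ifs with hq
  · rw [min_eq_left hq.le]; ring
  · rw [min_eq_right (not_lt.mp hq)]; ring

lemma critHubWeight_add_le {rcrit rhub : ℚ} (h : rhub ≤ rcrit) (M i j : ℕ) :
    critHubWeight M rcrit rhub (i + j) ≤
      critHubWeight M rcrit rhub i + critHubWeight M rcrit rhub j := by
  have hmin : ((min (i + j) M : ℕ) : ℚ) ≤ (min i M : ℕ) + (min j M : ℕ) := by
    exact_mod_cast (by omega)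
  unfold critHubWeight
  push_cast at hmin ⊢
  linarith [mul_le_mul_of_nonneg_right hmin (sub_nonneg.mpr h)]

theorem PowerSeries.le_apply_coeff_mul_of_subadditive {R : Type*} [Semiring R]
    (v : R → WithTop ℚ) (hv_mul : ∀ x y, v x + v y ≤ v (x * y))
    (hv_add : ∀ x y, min (v x) (v y) ≤ v (x + y)) (hv_zero : v 0 = ⊤)
    {w : ℕ → ℚ} (hw : ∀ i j, w (i + j) ≤ w i + w j) {F₁ F₂ : PowerSeries R} {β₁ β₂ : ℚ}
    (hF₁ : ∀ q, ((β₁ + w q : ℚ) : WithTop ℚ) ≤ v (coeff q F₁))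
    (hF₂ : ∀ q, ((β₂ + w q : ℚ) : WithTop ℚ) ≤ v (coeff q F₂)) (q : ℕ) :
    ((β₁ + β₂ + w q : ℚ) : WithTop ℚ) ≤ v (coeff q (F₁ * F₂)) := by
  rw [coeff_mul]
  refine Finset.sum_induction _ (fun x => ((β₁ + β₂ + w q : ℚ) : WithTop ℚ) ≤ v x)
    (fun a b ha hb => (le_min ha hb).trans (hv_add a b)) (hv_zero ▸ le_top) ?_
  rintro ⟨i, j⟩ hij
  rw [Finset.HasAntidiagonal.mem_antidiagonal] at hij
  subst hij
  calc ((β₁ + β₂ + w (i + j) : ℚ) : WithTop ℚ)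
      ≤ ((β₁ + w i : ℚ) : WithTop ℚ) + ((β₂ + w j : ℚ) : WithTop ℚ) := by
        rw [← WithTop.coe_add, WithTop.coe_le_coe]
        linarith [hw i j]
    _ ≤ v (coeff i F₁) + v (coeff j F₂) := add_le_add (hF₁ i) (hF₂ j)
    _ ≤ v (coeff i F₁ * coeff j F₂) := hv_mul _ _

theorem stmt18_general (K : Type*) [Field K] (v : K → WithTop ℚ)
    (hv_mul : ∀ x y : K, v (x * y) = v x + v y)
    (hv_add : ∀ x y : K, min (v x) (v y) ≤ v (x + y))
    (hv_zero : v 0 = ⊤)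
    (M : ℕ) (rcrit rhub s : ℚ)
    (h2 : rhub < rcrit) (hs : s = M * (rcrit - rhub))
    (w : ℕ → ℚ) (hw : ∀ q, w q = if q < M then q * rcrit else s + q * rhub)
    (F₁ F₂ : PowerSeries K) (β₁ β₂ : ℚ)
    (hF₁ : ∀ q, ((β₁ + w q : ℚ) : WithTop ℚ) ≤ v (PowerSeries.coeff (R := K) q F₁))
    (hF₂ : ∀ q, ((β₂ + w q : ℚ) : WithTop ℚ) ≤ v (PowerSeries.coeff (R := K) q F₂)) :
    ∀ q, ((β₁ + β₂ + w q : ℚ) : WithTop ℚ) ≤ v (PowerSeries.coeff (R := K) q (F₁ * F₂)) := by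
  have hw_eq : w = critHubWeight M rcrit rhub :=
    funext fun q => by rw [hw, hs, critHubWeight_eq_ite]
  subst hw_eq
  exact PowerSeries.le_apply_coeff_mul_of_subadditive v (fun x y => (hv_mul x y).ge) hv_add
    hv_zero (critHubWeight_add_le h2.le M) hF₁ hF₂

/-- Superadditivity of the crit-hub valuation `v_ch` on products (Lemma `Lcrithub1(ii)`):
writing `w q = q·r_crit` for `q < M` and `w q = s + q·r_hub` for `q ≥ M`, with
`s = M (r_crit - r_hub)` and `0 < r_hub < r_crit`, a lower bound `β ≤ v_ch(F)` means
`v(coeff q F) ≥ β + w q` for all `q`; then lower bounds for `F₁` and `F₂` add up to a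
lower bound for `F₁ F₂`. -/
theorem stmt18 (K : Type*) [Field K] (v : K → WithTop ℚ)
    (hv_mul : ∀ x y : K, v (x * y) = v x + v y)
    (hv_add : ∀ x y : K, min (v x) (v y) ≤ v (x + y))
    (hv_zero : v 0 = ⊤)
    (M : ℕ) (hM : 0 < M) (rcrit rhub s : ℚ)
    (h1 : 0 < rhub) (h2 : rhub < rcrit) (hs : s = M * (rcrit - rhub))
    (w : ℕ → ℚ) (hw : ∀ q, w q = if q < M then q * rcrit else s + q * rhub)
    (F₁ F₂ : PowerSeries K) (β₁ β₂ : ℚ)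
    (hF₁ : ∀ q, ((β₁ + w q : ℚ) : WithTop ℚ) ≤ v (PowerSeries.coeff (R := K) q F₁))
    (hF₂ : ∀ q, ((β₂ + w q : ℚ) : WithTop ℚ) ≤ v (PowerSeries.coeff (R := K) q F₂)) :
    ∀ q, ((β₁ + β₂ + w q : ℚ) : WithTop ℚ) ≤ v (PowerSeries.coeff (R := K) q (F₁ * F₂)) :=
  stmt18_general K v hv_mul hv_add hv_zero M rcrit rhub s h2 hs w hw F₁ F₂ β₁ β₂ hF₁ hF₂
end
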